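/- arXiv:math/0101075 — 3 statements merged into one kernel-verified Lean document; each statement's English description precedes it below -/
import Mathlib

section
/- Let P be a graded poset, ℓ a positive integer, and [x,y] an interval of P. For any interval [x_i, y_j] of D^ℓ P corresponding to [x,y] (i.e., x_i a copy of x and y_j a copy of y), one has μ_k([x,y]) = μ_{kℓ}([x_i, y_j]). -/
open scoped Classical

attribute [local instance] Fintype.ofFinite

/-- A rank function making a bounded poset graded of rank `n+1`. -/
def IsGraded (P : Type) [PartialOrder P] [BoundedOrder P] (ρ : P → ℕ) (n : ℕ) : Prop :=
  ρ ⊥ = 0 ∧ ρ ⊤ = n + 1 ∧ ∀ x y : P, x ⋖ y → ρ y = ρ x + 1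

/-- A poset is `r`-thick if every nonempty open interval has at least `r` elements. -/
def RThick (P : Type) [PartialOrder P] [Fintype P] (r : ℕ) : Prop :=
  ∀ x y : P, x < y → (∃ z, x < z ∧ z < y) →
    r ≤ (Finset.univ.filter fun z => x < z ∧ z < y).card

/-- The flag number `f_S(P)`: the number of chains of `P` whose set of ranks is `S`. -/
noncomputable def flagNum {P : Type} [PartialOrder P] [Fintype P] (ρ : P → ℕ)
    (S : Finset ℕ) : ℕ :=
  (Finset.univ.filter fun c : Finset P =>
    IsChain (· ≤ ·) (c : Set P) ∧ c.image ρ = S ∧ c.card = S.card).card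

/-- The flag number `f_S([x,y])` of the interval `[x,y]`, with ranks relative to `x`. -/
noncomputable def flagNumI {P : Type} [PartialOrder P] [Fintype P] (ρ : P → ℕ)
    (x y : P) (S : Finset ℕ) : ℕ :=
  (Finset.univ.filter fun c : Finset P =>
    IsChain (· ≤ ·) (c : Set P) ∧ (∀ z ∈ c, x < z ∧ z < y) ∧
      c.image (fun z => ρ z - ρ x) = S ∧ c.card = S.card).card

/-- The `k`-Möbius function `μ_k([x,y])`. -/
noncomputable def muk {P : Type} [PartialOrder P] [Fintype P] (k : ℝ) (x : P) (y : P) : ℝ :=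
  if x = y then 1
  else -1 - (1/k) * ∑ z ∈ (Finset.univ.filter fun z => x < z ∧ z < y).attach,
    muk k x z.val
termination_by (Finset.univ.filter fun w => w < y).card
decreasing_by
  have hz : (z : P) < y := (Finset.mem_filter.mp z.2).2.2
  apply Finset.card_lt_card
  rw [Finset.ssubset_iff_of_subset]
  · exact ⟨z, Finset.mem_filter.mpr ⟨Finset.mem_univ _, hz⟩,
      fun hc => absurd (Finset.mem_filter.mp hc).2 (lt_irrefl _)⟩
  · intro w hw
    exact Finset.mem_filter.mpr ⟨Finset.mem_univ _, (Finset.mem_filter.mp hw).2.trans hz⟩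

/-- The ordinary Möbius function of a finite poset. -/
noncomputable def mobius {P : Type} [PartialOrder P] [Fintype P] (x : P) (y : P) : ℤ :=
  if x = y then 1
  else -∑ z ∈ (Finset.univ.filter fun z => x ≤ z ∧ z < y).attach, mobius x z.val
termination_by (Finset.univ.filter fun w => w < y).card
decreasing_by
  have hz : (z : P) < y := (Finset.mem_filter.mp z.2).2.2
  apply Finset.card_lt_card
  rw [Finset.ssubset_iff_of_subset]
  · exact ⟨z, Finset.mem_filter.mpr ⟨Finset.mem_univ _, hz⟩,
      fun hc => absurd (Finset.mem_filter.mp hc).2 (lt_irrefl _)⟩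
  · intro w hw
    exact Finset.mem_filter.mpr ⟨Finset.mem_univ _, (Finset.mem_filter.mp hw).2.trans hz⟩

/-- A graded poset is `k`-Eulerian when `μ_k([x,y]) = (-1)^{ρ(y)-ρ(x)}` on every interval. -/
def IsKEulerian (P : Type) [PartialOrder P] [Fintype P] (ρ : P → ℕ) (k : ℝ) : Prop :=
  ∀ x y : P, x ≤ y → muk k x y = (-1 : ℝ) ^ (ρ y - ρ x)

/-- The flag `L^k` vector of a poset of rank `n+1`. -/
noncomputable def Lk {P : Type} [PartialOrder P] [Fintype P] (k : ℝ) (n : ℕ) (ρ : P → ℕ)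
    (S : Finset ℕ) : ℝ :=
  (-1 : ℝ) ^ (n - S.card) *
    ∑ T ∈ (Finset.Icc 1 n).powerset.filter (fun T => Finset.Icc 1 n \ S ⊆ T),
      (-(1/(2*k))) ^ T.card * (flagNum ρ T : ℝ)

/-- The flag `L^k` vector of an interval `[x,y]` of rank `n+1`. -/
noncomputable def LkI {P : Type} [PartialOrder P] [Fintype P] (k : ℝ) (n : ℕ) (ρ : P → ℕ)
    (x y : P) (S : Finset ℕ) : ℝ :=
  (-1 : ℝ) ^ (n - S.card) *
    ∑ T ∈ (Finset.Icc 1 n).powerset.filter (fun T => Finset.Icc 1 n \ S ⊆ T),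
      (-(1/(2*k))) ^ T.card * (flagNumI ρ x y T : ℝ)

/-- A set is even if it is a disjoint union of intervals of even cardinality. -/
def IsEvenSet (S : Finset ℕ) : Prop :=
  ∃ J : Finset (ℕ × ℕ),
    S = J.biUnion (fun p => Finset.Icc p.1 p.2) ∧
    (∀ p ∈ J, p.1 ≤ p.2 ∧ Even (p.2 + 1 - p.1)) ∧
    (∀ p ∈ J, ∀ q ∈ J, p ≠ q → Disjoint (Finset.Icc p.1 p.2) (Finset.Icc q.1 q.2))

/-- The horizontal `r`-fold duplication `D^r P`. -/
inductive Dup (P : Type) [PartialOrder P] [BoundedOrder P] (r : ℕ) : Type where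
  | bot : Dup P r
  | top : Dup P r
  | mid : {x : P // x ≠ ⊥ ∧ x ≠ ⊤} → Fin r → Dup P r

namespace Dup

variable {P : Type} [PartialOrder P] [BoundedOrder P] {r : ℕ}

def le : Dup P r → Dup P r → Prop
  | .bot, _ => True
  | .mid _ _, .bot => False
  | .mid x i, .mid y j => (x = y ∧ i = j) ∨ (x : P) < (y : P)
  | .mid _ _, .top => True
  | .top, .top => True
  | .top, _ => False

instance : PartialOrder (Dup P r) where
  le := Dup.le
  le_refl a := by cases a with
    | bot => trivial
    | top => trivial
    | mid x i => exact Or.inl ⟨rfl, rfl⟩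
  le_trans a b c hab hbc := by
    cases a with
    | bot => trivial
    | top =>
      cases b with
      | top =>
        cases c with
        | top => trivial
        | bot => exact hbc.elim
        | mid _ _ => exact hbc.elim
      | bot => exact hab.elim
      | mid _ _ => exact hab.elim
    | mid x i =>
      cases b with
      | bot => exact hab.elim
      | top =>
        cases c with
        | top => trivial
        | bot => exact hbc.elim
        | mid _ _ => exact hbc.elim
      | mid y j =>
        cases c with
        | bot => exact hbc.elim
        | top => trivial
        | mid z l =>
          rcases hab with ⟨rfl, rfl⟩ | h1
          · exact hbc
          · rcases hbc with ⟨rfl, rfl⟩ | h2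
            · exact Or.inr h1
            · exact Or.inr (h1.trans h2)
  le_antisymm a b hab hba := by
    cases a with
    | bot =>
      cases b with
      | bot => rfl
      | top => exact hba.elim
      | mid _ _ => exact hba.elim
    | top =>
      cases b with
      | top => rfl
      | bot => exact hab.elim
      | mid _ _ => exact hab.elim
    | mid x i =>
      cases b with
      | bot => exact hab.elim
      | top => exact hba.elim
      | mid y j =>
        rcases hab with ⟨rfl, rfl⟩ | h1
        · rfl
        · rcases hba with ⟨rfl, rfl⟩ | h2
          · exact absurd h1 (lt_irrefl _)
          · exact absurd (h1.trans h2) (lt_irrefl _)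

instance : BoundedOrder (Dup P r) where
  top := .top
  bot := .bot
  le_top a := by cases a <;> trivial
  bot_le a := trivial

instance [Finite P] : Finite (Dup P r) :=
  Finite.of_injective
    (fun a : Dup P r =>
      (match a with
        | .bot => none
        | .top => some none
        | .mid x i => some (some (x, i)) :
        Option (Option ({x : P // x ≠ ⊥ ∧ x ≠ ⊤} × Fin r))))
    (by intro a b h; cases a <;> cases b <;> simp_all)

/-- The rank function of `D^r P`, where `P` has rank `n+1`. -/
def rank (ρ : P → ℕ) (n : ℕ) : Dup P r → ℕ
  | .bot => 0
  | .top => n + 1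
  | .mid x _ => ρ x.val

/-- `a ∈ D^r P` is a copy of `x ∈ P`. -/
def IsCopy (a : Dup P r) (x : P) : Prop :=
  (x = ⊥ ∧ a = .bot) ∨ (x = ⊤ ∧ a = .top) ∨ ∃ h i, a = .mid ⟨x, h⟩ i

end Dup

/-!
The open interval `(a, b)` of `D^ℓ P` consists of the `ℓ` copies `z_i` of each `z` in the
open interval `(x, y)` of `P`, and by induction each `μ_{kℓ}(a, z_i)` equals `μ_k(x, z)`.
So the sum in the recursion for `μ_{kℓ}(a, b)` is `ℓ` times the one for `μ_k(x, y)`, and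
the factor `ℓ` cancels against `1/(kℓ)`.
-/

open Finset

theorem muk_eq_ite_sum {P : Type} [PartialOrder P] [Fintype P] (k : ℝ) (x y : P) :
    muk k x y = if x = y then 1
      else -1 - (1 / k) * ∑ z ∈ univ.filter (fun z => x < z ∧ z < y), muk k x z := by
  rw [muk, sum_attach _ (fun z => muk k x z)]

namespace Dup

variable {P : Type} [PartialOrder P] [BoundedOrder P] {r : ℕ}

def proj : Dup P r → P
  | .bot => ⊥
  | .top => ⊤
  | .mid w _ => w

theorem isCopy_iff_proj_eq {a : Dup P r} {x : P} : IsCopy a x ↔ a.proj = x := by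
  cases a with
  | bot => simp [IsCopy, proj, eq_comm]
  | top => simp [IsCopy, proj, eq_comm]
  | mid w i =>
    obtain ⟨w, hw⟩ := w
    simp only [IsCopy, proj, reduceCtorEq, and_false, false_or, mid.injEq, Subtype.mk.injEq]
    exact ⟨fun ⟨_, _, hwx, _⟩ => hwx, fun hwx => ⟨hwx ▸ hw, i, hwx, rfl⟩⟩

theorem mid_lt_mid {w v : {x : P // x ≠ ⊥ ∧ x ≠ ⊤}} {i j : Fin r} :
    mid w i < mid v j ↔ (w : P) < v := by
  refine ⟨fun h => ?_, fun h => lt_of_le_not_ge (Or.inr h) ?_⟩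
  · rcases h.le with ⟨rfl, rfl⟩ | h'
    · exact absurd h (lt_irrefl _)
    · exact h'
  · rintro (⟨rfl, -⟩ | h')
    exacts [lt_irrefl _ h, lt_asymm h h']

theorem lt_mid_iff {a : Dup P r} {w : {x : P // x ≠ ⊥ ∧ x ≠ ⊤}} {i : Fin r} :
    a < mid w i ↔ a.proj < w := by
  cases a with
  | bot => exact iff_of_true (bot_lt_iff_ne_bot.mpr nofun) (bot_lt_iff_ne_bot.mpr w.2.1)
  | top => exact iff_of_false not_top_lt not_top_lt
  | mid v j => exact mid_lt_mid

theorem mid_lt_iff {b : Dup P r} {w : {x : P // x ≠ ⊥ ∧ x ≠ ⊤}} {i : Fin r} :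
    mid w i < b ↔ (w : P) < b.proj := by
  cases b with
  | bot => exact iff_of_false not_lt_bot not_lt_bot
  | top => exact iff_of_true (lt_top_iff_ne_top.mpr nofun) (lt_top_iff_ne_top.mpr w.2.2)
  | mid v j => exact mid_lt_mid

theorem exists_eq_mid_of_lt_of_lt {a b c : Dup P r} (hac : a < c) (hcb : c < b) :
    ∃ w i, c = mid w i := by
  cases c with
  | bot => exact absurd hac not_lt_bot
  | top => exact absurd hcb not_top_lt
  | mid w i => exact ⟨w, i, rfl⟩

-- Without `⊥ ≠ ⊤`, `bot` and `top` would be two comparable copies of the same element.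
theorem eq_of_proj_eq_of_le (hbt : (⊥ : P) ≠ ⊤) {a b : Dup P r} (hproj : a.proj = b.proj)
    (hab : a ≤ b) : a = b := by
  cases a with
  | bot =>
    cases b with
    | bot => rfl
    | top => exact absurd hproj hbt
    | mid w i => exact absurd hproj.symm w.2.1
  | top =>
    cases b with
    | top => rfl
    | bot | mid _ _ => exact hab.elim
  | mid w i =>
    cases b with
    | bot => exact hab.elim
    | top => exact absurd hproj w.2.2
    | mid v j =>
      rcases hab with ⟨rfl, rfl⟩ | hlt
      · rfl
      · exact (hlt.ne hproj).elim

theorem sum_Ioo_proj [Finite P] {M : Type*} [AddCommMonoid M] (f : P → M) (a b : Dup P r) :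
    ∑ c ∈ univ.filter (fun c => a < c ∧ c < b), f c.proj
      = r • ∑ z ∈ univ.filter (fun z => a.proj < z ∧ z < b.proj), f z := by
  set I := univ.filter (fun z => a.proj < z ∧ z < b.proj)
  have hI : ∀ z ∈ I, z ≠ ⊥ ∧ z ≠ ⊤ := fun z hz =>
    ⟨ne_bot_of_gt (mem_filter.mp hz).2.1, ne_top_of_lt (mem_filter.mp hz).2.2⟩
  have hprod : ∑ p ∈ I ×ˢ (univ : Finset (Fin r)), f p.1 = r • ∑ z ∈ I, f z := by
    simp [sum_product, smul_sum]
  rw [← hprod]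
  symm
  refine sum_bij (fun p hp => mid ⟨p.1, hI p.1 (mem_product.mp hp).1⟩ p.2) ?_ ?_ ?_ ?_
  · intro p hp
    simpa only [mem_filter, mem_univ, true_and, lt_mid_iff, mid_lt_iff] using
      (mem_filter.mp (mem_product.mp hp).1).2
  · rintro ⟨z, i⟩ _ ⟨z', i'⟩ _ h
    simp only [mid.injEq, Subtype.mk.injEq] at h
    rw [h.1, h.2]
  · intro c hc
    obtain ⟨-, hac, hcb⟩ := mem_filter.mp hc
    obtain ⟨w, i, rfl⟩ := exists_eq_mid_of_lt_of_lt hac hcb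
    exact ⟨(w, i), mem_product.mpr
      ⟨mem_filter.mpr ⟨mem_univ _, lt_mid_iff.mp hac, mid_lt_iff.mp hcb⟩, mem_univ _⟩, rfl⟩
  · exact fun _ _ => rfl

theorem muk_proj [Finite P] (hbt : (⊥ : P) ≠ ⊤) (hr : r ≠ 0) (k : ℝ) {a b : Dup P r}
    (hab : a ≤ b) : muk k a.proj b.proj = muk (k * r) a b := by
  induction b using WellFoundedLT.induction with
  | _ b ih =>
    rw [muk_eq_ite_sum, muk_eq_ite_sum (k * r)]
    by_cases hba : a = b
    · simp [hba]
    have hproj : a.proj ≠ b.proj := fun h => hba (eq_of_proj_eq_of_le hbt h hab)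
    have hsum : ∑ c ∈ univ.filter (fun c => a < c ∧ c < b), muk (k * r) a c
        = r • ∑ z ∈ univ.filter (fun z => a.proj < z ∧ z < b.proj), muk k a.proj z := by
      rw [← sum_Ioo_proj]
      refine sum_congr rfl fun c hc => ?_
      obtain ⟨-, hac, hcb⟩ := mem_filter.mp hc
      exact (ih c hcb hac.le).symm
    rw [if_neg hproj, if_neg hba, hsum, nsmul_eq_mul, one_div, one_div, mul_inv, mul_assoc,
      inv_mul_cancel_left₀ (Nat.cast_ne_zero.mpr hr)]

end Dup

theorem muk_dup_general {P : Type} [PartialOrder P] [BoundedOrder P] [Finite P]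
    (n ℓ : ℕ) (hℓ : 1 ≤ ℓ) (ρ : P → ℕ) (hP : IsGraded P ρ n) (k : ℝ)
    (x y : P) (a b : Dup P ℓ) (hab : a ≤ b)
    (ha : Dup.IsCopy a x) (hb : Dup.IsCopy b y) :
    muk k x y = muk (k * ℓ) a b := by
  have hbot_ne_top : (⊥ : P) ≠ ⊤ := fun h => by
    have := hP.2.1
    rw [← h, hP.1] at this
    omega
  rw [Dup.isCopy_iff_proj_eq] at ha hb
  subst ha hb
  exact Dup.muk_proj hbot_ne_top (by omega) k hab

/-- `μ_k([x,y]) = μ_{kℓ}([x_i,y_j])` for corresponding intervals of `D^ℓ P`. -/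
theorem muk_dup {P : Type} [PartialOrder P] [BoundedOrder P] [Finite P]
    (n ℓ : ℕ) (hℓ : 1 ≤ ℓ) (ρ : P → ℕ) (hP : IsGraded P ρ n) (k : ℝ) (hk : 0 < k)
    (x y : P) (hxy : x ≤ y) (a b : Dup P ℓ) (hab : a ≤ b)
    (ha : Dup.IsCopy a x) (hb : Dup.IsCopy b y) :
    muk k x y = muk (k * ℓ) a b :=
  muk_dup_general n ℓ hℓ ρ hP k x y a b hab ha hb
end

section
/- A graded poset P is k-Eulerian if and only if D^ℓ P is kℓ-Eulerian. -/
open scoped Classical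

attribute [local instance] Fintype.ofFinite

/-!
Every element of `D^ℓ P` is a copy of an element of `P`, and `a < b` in `D^ℓ P` exactly when the
element copied by `a` lies below the one copied by `b`; each element other than `0̂, 1̂` has `ℓ`
copies. So an open interval of `D^ℓ P` consists of `ℓ` copies of the corresponding open interval
of `P`, the sum in the recursion for `μ_{kℓ}` is `ℓ` times the one for `μ_k`, and by induction
`μ_{kℓ}([a,b]) = μ_k([x,y])` whenever `a ≤ b` are copies of `x ≤ y`.
-/

open Finset

lemma muk_self {P : Type} [PartialOrder P] [Fintype P] (k : ℝ) (x : P) : muk k x x = 1 := by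
  rw [muk, if_pos rfl]

lemma muk_of_ne {P : Type} [PartialOrder P] [Fintype P] (k : ℝ) {x y : P} (h : x ≠ y) :
    muk k x y = -1 - (1 / k) * ∑ z ∈ univ.filter (fun z => x < z ∧ z < y), muk k x z := by
  rw [muk, if_neg h, sum_attach _ (fun z => muk k x z)]

theorem muk_mul_eq_of_card_fiber {Q P : Type} [PartialOrder Q] [Fintype Q] [PartialOrder P]
    [Fintype P] (f : Q → P) (hf : ∀ a b, a < b ↔ f a < f b) {r : ℕ} (hr : r ≠ 0)
    (hfib : ∀ a b z, f a < z → z < f b → (univ.filter fun c => f c = z).card = r)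
    (k : ℝ) {a b : Q} (hab : a ≤ b) : muk (k * r) a b = muk k (f a) (f b) := by
  induction b using WellFoundedLT.induction with
  | _ b ih =>
  rcases hab.eq_or_lt with rfl | hlt
  · rw [muk_self, muk_self]
  have hsum : ∑ c ∈ univ.filter (fun c => a < c ∧ c < b), muk (k * r) a c
      = r * ∑ z ∈ univ.filter (fun z => f a < z ∧ z < f b), muk k (f a) z := by
    calc _ = ∑ c ∈ univ.filter (fun c => a < c ∧ c < b), muk k (f a) (f c) :=
          sum_congr rfl fun c hc => ih c (mem_filter.1 hc).2.2 (mem_filter.1 hc).2.1.le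
      _ = ∑ z ∈ univ.filter (fun z => f a < z ∧ z < f b),
            ∑ c ∈ univ.filter (fun c => a < c ∧ c < b) with f c = z, muk k (f a) (f c) := by
          refine (sum_fiberwise_of_maps_to (fun c hc => ?_) _).symm
          simp only [mem_filter, mem_univ, true_and, ← hf] at hc ⊢
          exact hc
      _ = _ := by
          rw [mul_sum]
          refine sum_congr rfl fun z hz => ?_
          obtain ⟨haz, hzb⟩ := (mem_filter.1 hz).2
          have hfiber : (univ.filter fun c => a < c ∧ c < b).filter (fun c => f c = z)
              = univ.filter fun c => f c = z := by
            ext c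
            simp only [mem_filter, mem_univ, true_and, and_iff_right_iff_imp]
            rintro rfl
            exact ⟨(hf a c).2 haz, (hf c b).2 hzb⟩
          rw [sum_congr rfl fun c hc => by rw [(mem_filter.1 hc).2], hfiber, sum_const,
            hfib a b z haz hzb, nsmul_eq_mul]
  rw [muk_of_ne _ hlt.ne, muk_of_ne _ ((hf a b).1 hlt).ne, hsum, one_div, one_div, mul_inv,
    mul_assoc, inv_mul_cancel_left₀ (Nat.cast_ne_zero.2 hr : (r : ℝ) ≠ 0)]

namespace Dup

variable {P : Type} [PartialOrder P] [BoundedOrder P] {r : ℕ}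

def base : Dup P r → P
  | .bot => ⊥
  | .top => ⊤
  | .mid x _ => x.val

lemma lt_iff_base_lt [Nontrivial P] {a b : Dup P r} : a < b ↔ a.base < b.base := by
  rw [lt_iff_le_not_ge]
  show a.le b ∧ ¬ b.le a ↔ _
  cases a <;> cases b <;> simp only [Dup.le, base] <;> simp [bot_lt_top]
  case bot.mid x _ => exact bot_lt_iff_ne_bot.2 x.2.1
  case mid.top x _ => exact lt_top_iff_ne_top.2 x.2.2
  case mid.mid x _ y _ =>
    constructor
    · rintro ⟨⟨rfl, rfl⟩ | hxy, hne, -⟩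
      · exact absurd rfl (hne rfl)
      · exact hxy
    · intro hxy
      exact ⟨Or.inr hxy, fun h => absurd h hxy.ne', hxy.asymm⟩

lemma base_surjective (hr : 0 < r) : Function.Surjective (base : Dup P r → P) := by
  intro x
  by_cases hb : x = ⊥
  · exact ⟨bot, hb.symm⟩
  by_cases ht : x = ⊤
  · exact ⟨top, ht.symm⟩
  exact ⟨mid ⟨x, hb, ht⟩ ⟨0, hr⟩, rfl⟩

lemma card_filter_base_eq [Finite P] {z : P} (hbot : ⊥ < z) (htop : z < ⊤) :
    (univ.filter fun c : Dup P r => c.base = z).card = r := by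
  have hinj : Function.Injective (mid ⟨z, hbot.ne', htop.ne⟩ : Fin r → Dup P r) :=
    fun i j h => by cases h; rfl
  have hfiber : (univ.filter fun c : Dup P r => c.base = z)
      = univ.image (mid ⟨z, hbot.ne', htop.ne⟩) := by
    ext c
    cases c <;> simp [base, hbot.ne', htop.ne, Subtype.ext_iff, eq_comm]
  rw [hfiber, card_image_of_injective _ hinj, card_univ, Fintype.card_fin]

lemma rank_eq_base {ρ : P → ℕ} {n : ℕ} (hP : IsGraded P ρ n) (a : Dup P r) :
    rank ρ n a = ρ a.base := by
  cases a with
  | bot => exact hP.1.symm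
  | top => exact hP.2.1.symm
  | mid _ _ => rfl

end Dup

lemma IsGraded.nontrivial {P : Type} [PartialOrder P] [BoundedOrder P] {ρ : P → ℕ} {n : ℕ}
    (hP : IsGraded P ρ n) : Nontrivial P :=
  ⟨⊥, ⊤, fun h => by simpa [h, hP.2.1] using hP.1⟩

theorem isKEulerian_dup_iff_general {P : Type} [PartialOrder P] [BoundedOrder P] [Finite P]
    (n ℓ : ℕ) (hℓ : 1 ≤ ℓ) (ρ : P → ℕ) (hP : IsGraded P ρ n) (k : ℝ) :
    IsKEulerian P ρ k ↔ IsKEulerian (Dup P ℓ) (Dup.rank ρ n) (k * ℓ) := by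
  have := hP.nontrivial
  have hμ : ∀ a b : Dup P ℓ, a ≤ b → muk (k * ℓ) a b = muk k a.base b.base := fun a b =>
    muk_mul_eq_of_card_fiber Dup.base (fun _ _ => Dup.lt_iff_base_lt) (by omega)
      (fun _ _ _ h1 h2 => Dup.card_filter_base_eq (bot_le.trans_lt h1) (h2.trans_le le_top)) k
  have hmono : Monotone (Dup.base : Dup P ℓ → P) :=
    StrictMono.monotone fun _ _ => Dup.lt_iff_base_lt.1
  simp only [IsKEulerian, Dup.rank_eq_base hP]
  constructor
  · intro hE a b hab
    rw [hμ a b hab, hE _ _ (hmono hab)]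
  · intro hE x y hxy
    obtain ⟨a, rfl⟩ := Dup.base_surjective hℓ x
    obtain ⟨b, rfl⟩ := Dup.base_surjective hℓ y
    rcases hxy.eq_or_lt with h | h
    · rw [h, muk_self, Nat.sub_self, pow_zero]
    · rw [← hμ a b (Dup.lt_iff_base_lt.2 h).le, hE a b (Dup.lt_iff_base_lt.2 h).le]

/-- `P` is `k`-Eulerian iff `D^ℓ P` is `kℓ`-Eulerian. -/
theorem isKEulerian_dup_iff {P : Type} [PartialOrder P] [BoundedOrder P] [Finite P]
    (n ℓ : ℕ) (hℓ : 1 ≤ ℓ) (ρ : P → ℕ) (hP : IsGraded P ρ n) (k : ℝ) (hk : 0 < k) :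
    IsKEulerian P ρ k ↔ IsKEulerian (Dup P ℓ) (Dup.rank ρ n) (k * ℓ) :=
  isKEulerian_dup_iff_general n ℓ hℓ ρ hP k
end

section
/- Let P be a k-Eulerian poset of rank n+1. For every S ⊆ [1,n] and every maximal interval [i,ℓ] of [1,n]\S, the flag numbers satisfy k((−1)^{i−1} + (−1)^{ℓ+1}) f_S(P) + ∑_{j=i}^{ℓ} (−1)^j f_{S∪{j}}(P) = 0. -/
open scoped Classical

attribute [local instance] Fintype.ofFinite

/-!
Fix a chain `c` with rank set `S` and let `x` and `y` be its elements of rank `i - 1` and `ℓ + 1`,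
with `⊥` and `⊤` standing in when the gap `[i, ℓ]` reaches an end of `[1, n]`. Since no element of
`c` has rank in the gap, the chains with rank set `S ∪ {j}`, `j ∈ [i, ℓ]`, are exactly the `c ∪ {z}`
with `x < z < y` and `ρ z = j`. Hence `∑ⱼ (-1)^j f_{S ∪ {j}} = ∑_c ∑_{x < z < y} (-1)^{ρ z}`, and
the recursion defining `μ_k([x, y]) = (-1)^{ρ y - ρ x}` evaluates each inner sum as
`-k ((-1)^{i-1} + (-1)^{ℓ+1})`.
-/

open Finset

section GradedChains

variable {P : Type} [PartialOrder P] {ρ : P → ℕ} {s : Set P} {a b x y z : P}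

theorem IsGraded.strictMono [BoundedOrder P] [Finite P] {n : ℕ} (hP : IsGraded P ρ n) :
    StrictMono ρ := by
  intro x y hxy
  induction y using WellFoundedLT.induction with
  | ind y ih =>
    obtain ⟨w, hxw, hwy⟩ := exists_le_covBy_of_lt hxy
    rw [hP.2.2 w y hwy]
    rcases hxw.eq_or_lt with rfl | hxw
    · omega
    · have := ih w hwy.lt hxw
      omega

theorem IsChain.le_of_rank_le (hρ : StrictMono ρ) (hs : IsChain (· ≤ ·) s) (ha : a ∈ s)
    (hb : b ∈ s) (h : ρ a ≤ ρ b) : a ≤ b := by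
  rcases eq_or_ne a b with rfl | hab
  · exact le_rfl
  · exact (hs ha hb hab).resolve_right fun hba => (hρ (lt_of_le_of_ne hba hab.symm)).not_ge h

theorem IsChain.lt_of_rank_lt (hρ : StrictMono ρ) (hs : IsChain (· ≤ ·) s) (ha : a ∈ s)
    (hb : b ∈ s) (h : ρ a < ρ b) : a < b :=
  lt_of_le_of_ne (hs.le_of_rank_le hρ ha hb h.le) (by rintro rfl; exact h.false)

theorem IsChain.insert_iff_of_rank_gap (hρ : StrictMono ρ) (hs : IsChain (· ≤ ·) s)
    (hx : x ∈ s) (hy : y ∈ s) (hgap : ∀ w ∈ s, ρ w ≤ ρ x ∨ ρ y ≤ ρ w)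
    (hxz : ρ x < ρ z) (hzy : ρ z < ρ y) :
    IsChain (· ≤ ·) (insert z s) ↔ x < z ∧ z < y := by
  refine ⟨fun h => ?_, fun ⟨hx_lt, hlt_y⟩ => hs.insert fun w hw _ => ?_⟩
  · have hz := Set.mem_insert z s
    exact ⟨h.lt_of_rank_lt hρ (Set.mem_insert_of_mem z hx) hz hxz,
      h.lt_of_rank_lt hρ hz (Set.mem_insert_of_mem z hy) hzy⟩
  · rcases hgap w hw with hwx | hyw
    · exact Or.inr ((hs.le_of_rank_le hρ hw hx hwx).trans hx_lt.le)
    · exact Or.inl (hlt_y.le.trans (hs.le_of_rank_le hρ hy hw hyw))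

theorem IsChain.insert_bot_insert_top [BoundedOrder P] (hs : IsChain (· ≤ ·) s) :
    IsChain (· ≤ ·) (insert ⊥ (insert ⊤ s)) :=
  (hs.insert fun _ _ _ => Or.inr le_top).insert fun _ _ _ => Or.inl bot_le

end GradedChains

theorem IsKEulerian.sum_neg_one_pow_rank {P : Type} [PartialOrder P] [Finite P] {ρ : P → ℕ}
    {k : ℝ} (hE : IsKEulerian P ρ k) (hρ : Monotone ρ) (hk : k ≠ 0) {x y : P} (hxy : x < y) :
    ∑ z ∈ univ.filter (fun z => x < z ∧ z < y), (-1 : ℝ) ^ ρ z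
      = -k * ((-1) ^ ρ x + (-1) ^ ρ y) := by
  have hsign : ∀ z, x ≤ z → (-1 : ℝ) ^ ρ z = (-1) ^ ρ x * (-1) ^ (ρ z - ρ x) := fun z hxz => by
    rw [← pow_add, Nat.add_sub_cancel' (hρ hxz)]
  have h := hE x y hxy.le
  rw [muk, if_neg hxy.ne, sum_attach _ (fun z => muk k x z),
    sum_congr rfl fun z hz => hE x z (mem_filter.mp hz).2.1.le] at h
  rw [sum_congr rfl fun z hz => hsign z (mem_filter.mp hz).2.1.le, ← mul_sum, hsign y hxy.le]
  field_simp at h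
  linear_combination (-(-1 : ℝ) ^ ρ x) * h

section FlagNumbers

variable {P : Type} [PartialOrder P] [Finite P] {ρ : P → ℕ} {S : Finset ℕ} {c : Finset P}

noncomputable def chainsWithRanks (ρ : P → ℕ) (S : Finset ℕ) : Finset (Finset P) :=
  univ.filter fun c : Finset P =>
    IsChain (· ≤ ·) (c : Set P) ∧ c.image ρ = S ∧ c.card = S.card

theorem flagNum_eq_card_chainsWithRanks (ρ : P → ℕ) (S : Finset ℕ) :
    flagNum ρ S = #(chainsWithRanks ρ S) :=
  rfl

theorem mem_chainsWithRanks :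
    c ∈ chainsWithRanks ρ S ↔
      IsChain (· ≤ ·) (c : Set P) ∧ c.image ρ = S ∧ c.card = S.card := by
  simp [chainsWithRanks]

noncomputable def chainExtensions (c : Finset P) : Finset P :=
  univ.filter fun z => IsChain (· ≤ ·) (insert z (c : Set P))

theorem insert_mem_chainsWithRanks (hc : c ∈ chainsWithRanks ρ S) {z : P}
    (hz : z ∈ chainExtensions c) (hzS : ρ z ∉ S) :
    insert z c ∈ chainsWithRanks ρ (insert (ρ z) S) := by
  obtain ⟨-, hcS, hcard⟩ := mem_chainsWithRanks.mp hc
  have hzc : z ∉ c := fun hzc => hzS (hcS ▸ mem_image_of_mem ρ hzc)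
  rw [mem_chainsWithRanks, coe_insert, image_insert, hcS, card_insert_of_notMem hzc,
    card_insert_of_notMem hzS, hcard]
  exact ⟨(mem_filter.mp hz).2, rfl, rfl⟩

theorem erase_mem_chainsWithRanks {j : ℕ} (hj : j ∉ S) (hc : c ∈ chainsWithRanks ρ (insert j S))
    {z : P} (hz : z ∈ c) (hzj : ρ z = j) : c.erase z ∈ chainsWithRanks ρ S := by
  obtain ⟨hchain, himage, hcard⟩ := mem_chainsWithRanks.mp hc
  have hinj : Set.InjOn ρ c := card_image_iff.mp (by rw [himage, hcard])
  refine mem_chainsWithRanks.mpr ⟨hchain.mono (coe_erase z c ▸ Set.sdiff_subset), ?_, ?_⟩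
  · rw [← sdiff_singleton_eq_erase, image_sdiff_of_injOn hinj (singleton_subset_iff.mpr hz),
      himage, image_singleton, hzj, sdiff_singleton_eq_erase, erase_insert hj]
  · rw [card_erase_of_mem hz, hcard, card_insert_of_notMem hj, Nat.add_sub_cancel]

theorem flagNum_insert {j : ℕ} (hj : j ∉ S) :
    flagNum ρ (insert j S) = ∑ c ∈ chainsWithRanks ρ S, #{z ∈ chainExtensions c | ρ z = j} := by
  have hnotMem : ∀ {c : Finset P} {z : P}, c ∈ chainsWithRanks ρ S → ρ z = j → z ∉ c :=
    fun hc hzj hzc => hj (hzj ▸ (mem_chainsWithRanks.mp hc).2.1 ▸ mem_image_of_mem ρ hzc)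
  rw [flagNum_eq_card_chainsWithRanks, ← card_sigma]
  symm
  refine card_bij (fun p _ => insert p.2 p.1) ?_ ?_ ?_
  · rintro ⟨c, z⟩ hcz
    obtain ⟨hc, hz, rfl⟩ : c ∈ _ ∧ z ∈ chainExtensions c ∧ ρ z = j := by
      simpa only [mem_sigma, mem_filter, and_assoc] using hcz
    exact insert_mem_chainsWithRanks hc hz hj
  · rintro ⟨c₁, z₁⟩ h₁ ⟨c₂, z₂⟩ h₂ he
    simp only [mem_sigma, mem_filter] at h₁ h₂
    obtain rfl : z₁ = z₂ :=
      (mem_insert.mp (he ▸ mem_insert_self z₁ c₁)).resolve_right (hnotMem h₂.1 h₁.2.2)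
    have hc := congrArg (erase · z₁) he
    simp only [erase_insert (hnotMem h₁.1 h₁.2.2), erase_insert (hnotMem h₂.1 h₂.2.2)] at hc
    rw [hc]
  · intro c hc
    obtain ⟨z, hz, hzj⟩ : ∃ z ∈ c, ρ z = j :=
      mem_image.mp ((mem_chainsWithRanks.mp hc).2.1 ▸ mem_insert_self j S)
    refine ⟨⟨c.erase z, z⟩, ?_, insert_erase hz⟩
    have hext : z ∈ chainExtensions (c.erase z) := by
      simpa only [chainExtensions, mem_filter, mem_univ, true_and, coe_erase,
        Set.insert_sdiff_singleton, Set.insert_eq_of_mem (mem_coe.mpr hz)]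
        using (mem_chainsWithRanks.mp hc).1
    simpa only [mem_sigma, mem_filter] using
      ⟨erase_mem_chainsWithRanks hj hc hz hzj, hext, hzj⟩

theorem sum_neg_one_pow_mul_flagNum_insert {J : Finset ℕ} (hJ : ∀ j ∈ J, j ∉ S) :
    ∑ j ∈ J, (-1 : ℝ) ^ j * (flagNum ρ (insert j S) : ℝ)
      = ∑ c ∈ chainsWithRanks ρ S, ∑ z ∈ chainExtensions c with ρ z ∈ J, (-1 : ℝ) ^ ρ z := by
  calc ∑ j ∈ J, (-1 : ℝ) ^ j * (flagNum ρ (insert j S) : ℝ)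
      = ∑ j ∈ J, ∑ c ∈ chainsWithRanks ρ S, ∑ z ∈ chainExtensions c with ρ z = j, (-1 : ℝ) ^ j := by
        refine sum_congr rfl fun j hj => ?_
        simp only [flagNum_insert (hJ j hj), sum_const, nsmul_eq_mul, Nat.cast_sum, mul_sum,
          mul_comm]
    _ = ∑ c ∈ chainsWithRanks ρ S, ∑ z ∈ chainExtensions c with ρ z ∈ J, (-1 : ℝ) ^ ρ z := by
        rw [sum_comm]
        exact sum_congr rfl fun c _ => sum_fiberwise_eq_sum_filter' _ _ _ _

end FlagNumbers

theorem exists_filter_chainExtensions_eq_Ioo {P : Type} [PartialOrder P] [BoundedOrder P]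
    [Finite P] {ρ : P → ℕ} {n : ℕ} (hP : IsGraded P ρ n) {S : Finset ℕ} {c : Finset P}
    (hc : c ∈ chainsWithRanks ρ S) {i ℓ : ℕ} (h1i : 1 ≤ i) (hil : i ≤ ℓ) (hln : ℓ ≤ n)
    (hgap : ∀ j ∈ Icc i ℓ, j ∉ S) (hmaxl : i = 1 ∨ i - 1 ∈ S) (hmaxr : ℓ = n ∨ ℓ + 1 ∈ S) :
    ∃ x y, x < y ∧ ρ x = i - 1 ∧ ρ y = ℓ + 1 ∧
      {z ∈ chainExtensions c | ρ z ∈ Icc i ℓ} = univ.filter fun z => x < z ∧ z < y := by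
  obtain ⟨hchain, hcS, -⟩ := mem_chainsWithRanks.mp hc
  have hρ := hP.strictMono
  set ĉ : Set P := insert ⊥ (insert ⊤ c)
  have hĉ : IsChain (· ≤ ·) ĉ := hchain.insert_bot_insert_top
  have hrank : ∀ r ∈ S, ∃ w ∈ ĉ, ρ w = r := fun r hr => by
    obtain ⟨w, hw, rfl⟩ := mem_image.mp (hcS ▸ hr)
    exact ⟨w, Set.mem_insert_of_mem _ (Set.mem_insert_of_mem _ hw), rfl⟩
  obtain ⟨x, hx, hxr⟩ : ∃ x ∈ ĉ, ρ x = i - 1 := by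
    rcases hmaxl with rfl | h
    · exact ⟨⊥, Set.mem_insert _ _, hP.1⟩
    · exact hrank _ h
  obtain ⟨y, hy, hyr⟩ : ∃ y ∈ ĉ, ρ y = ℓ + 1 := by
    rcases hmaxr with rfl | h
    · exact ⟨⊤, Set.mem_insert_of_mem _ (Set.mem_insert _ _), hP.2.1⟩
    · exact hrank _ h
  have hsep : ∀ w ∈ ĉ, ρ w ≤ ρ x ∨ ρ y ≤ ρ w := by
    rintro w (rfl | rfl | hw)
    · exact Or.inl (by rw [hP.1]; omega)
    · exact Or.inr (by rw [hP.2.1]; omega)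
    · have : ¬(i ≤ ρ w ∧ ρ w ≤ ℓ) := fun h =>
        hgap _ (mem_Icc.mpr h) (hcS ▸ mem_image_of_mem ρ hw)
      omega
  have hext : ∀ z, IsChain (· ≤ ·) (insert z (c : Set P)) ↔ IsChain (· ≤ ·) (insert z ĉ) :=
    fun z => ⟨fun h => by simpa only [ĉ, Set.insert_comm z] using h.insert_bot_insert_top,
      fun h => h.mono (Set.insert_subset_insert
        ((Set.subset_insert _ _).trans (Set.subset_insert _ _)))⟩
  refine ⟨x, y, hĉ.lt_of_rank_lt hρ hx hy (by omega), hxr, hyr, ?_⟩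
  ext z
  simp only [chainExtensions, mem_filter, mem_univ, true_and, mem_Icc, hext]
  constructor
  · rintro ⟨hz, hiz, hzl⟩
    exact (hĉ.insert_iff_of_rank_gap hρ hx hy hsep (by omega) (by omega)).mp hz
  · rintro ⟨hxz, hzy⟩
    have := hρ hxz
    have := hρ hzy
    exact ⟨(hĉ.insert_iff_of_rank_gap hρ hx hy hsep (by omega) (by omega)).mpr ⟨hxz, hzy⟩,
      by omega, by omega⟩

theorem generalized_dehn_sommerville_general {P : Type} [PartialOrder P] [BoundedOrder P] [Finite P]
    (n : ℕ) (ρ : P → ℕ) (k : ℝ) (hk : 0 < k) (hP : IsGraded P ρ n)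
    (hE : IsKEulerian P ρ k) (S : Finset ℕ)
    (i ℓ : ℕ) (h1i : 1 ≤ i) (hil : i ≤ ℓ) (hln : ℓ ≤ n)
    (hgap : ∀ j ∈ Finset.Icc i ℓ, j ∉ S)
    (hmaxl : i = 1 ∨ i - 1 ∈ S) (hmaxr : ℓ = n ∨ ℓ + 1 ∈ S) :
    k * ((-1 : ℝ) ^ (i - 1) + (-1 : ℝ) ^ (ℓ + 1)) * (flagNum ρ S : ℝ)
      + ∑ j ∈ Finset.Icc i ℓ, (-1 : ℝ) ^ j * (flagNum ρ (insert j S) : ℝ) = 0 := by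
  have hchains : ∀ c ∈ chainsWithRanks ρ S,
      ∑ z ∈ chainExtensions c with ρ z ∈ Icc i ℓ, (-1 : ℝ) ^ ρ z
        = -k * ((-1) ^ (i - 1) + (-1) ^ (ℓ + 1)) := fun c hc => by
    obtain ⟨x, y, hxy, hx, hy, hIoo⟩ :=
      exists_filter_chainExtensions_eq_Ioo hP hc h1i hil hln hgap hmaxl hmaxr
    rw [hIoo, hE.sum_neg_one_pow_rank hP.strictMono.monotone hk.ne' hxy, hx, hy]
  rw [sum_neg_one_pow_mul_flagNum_insert hgap, sum_congr rfl hchains, sum_const,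
    ← flagNum_eq_card_chainsWithRanks, nsmul_eq_mul]
  ring

/-- the generalized Dehn–Sommerville equations for `k`-Eulerian posets. -/
theorem generalized_dehn_sommerville {P : Type} [PartialOrder P] [BoundedOrder P] [Finite P]
    (n : ℕ) (ρ : P → ℕ) (k : ℝ) (hk : 0 < k) (hP : IsGraded P ρ n)
    (hE : IsKEulerian P ρ k) (S : Finset ℕ) (hS : S ⊆ Finset.Icc 1 n)
    (i ℓ : ℕ) (h1i : 1 ≤ i) (hil : i ≤ ℓ) (hln : ℓ ≤ n)
    (hgap : ∀ j ∈ Finset.Icc i ℓ, j ∉ S)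
    (hmaxl : i = 1 ∨ i - 1 ∈ S) (hmaxr : ℓ = n ∨ ℓ + 1 ∈ S) :
    k * ((-1 : ℝ) ^ (i - 1) + (-1 : ℝ) ^ (ℓ + 1)) * (flagNum ρ S : ℝ)
      + ∑ j ∈ Finset.Icc i ℓ, (-1 : ℝ) ^ j * (flagNum ρ (insert j S) : ℝ) = 0 :=
  generalized_dehn_sommerville_general n ρ k hk hP hE S i ℓ h1i hil hln hgap hmaxl hmaxr
end
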